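/- Let U ⊆ ℝ^p × ℝ^q be open and let W = {(x,η,ξ) ∈ ℝ^p × ℝ^q × ℝ^q : (x,η) ∈ U and (x,ξ) ∈ U}, an open subset of ℝ^p × ℝ^{2q} with {x : (x,0,0) ∈ W} = V. If f, g ∈ S_{r,c}(Ω_V^U), then the function h(x,η,ξ,t) := f(x,η,t)·g(x,ξ,t) belongs to S_{r,c}(Ω_V^W). -/

import Mathlib

open Set MeasureTheory

noncomputable section

/-- Points of `ℝ^p × ℝ^N × [0,1]` (the interval condition is imposed via the set `Omega`). -/
abbrev Pt (p N : ℕ) := (Fin p → ℝ) × (Fin N → ℝ) × ℝ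

/-- `Ω_V^U = {(x,ξ,t) ∈ ℝ^p × ℝ^N × [0,1] : (x, tξ) ∈ U}`. -/
def Omega {p N : ℕ} (U : Set ((Fin p → ℝ) × (Fin N → ℝ))) : Set (Pt p N) :=
  {z | z.2.2 ∈ Icc (0 : ℝ) 1 ∧ (z.1, z.2.2 • z.2.1) ∈ U}

/-- Directional derivative within a set `s`, as an operator on functions. -/
def mder {p N : ℕ} (s : Set (Pt p N)) (v : Pt p N) (g : Pt p N → ℂ) : Pt p N → ℂ :=
  fun z => fderivWithin ℝ g s z v

/-- Coordinate direction in the `x`-variables. -/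
def ex {p N : ℕ} (i : Fin p) : Pt p N := (Pi.single i 1, 0, 0)

/-- Coordinate direction in the fiber (`ξ`) variables. -/
def efib {p N : ℕ} (j : Fin N) : Pt p N := (0, Pi.single j 1, 0)

/-- Coordinate direction in the `t`-variable. -/
def et {p N : ℕ} : Pt p N := (0, 0, 1)

/-- The mixed partial derivative `∂_x^l ∂_ξ^α ∂_t^m g` taken within the set `s`. -/
def mixedD {p N : ℕ} (s : Set (Pt p N)) (l : Fin p → ℕ) (α : Fin N → ℕ) (m : ℕ)
    (g : Pt p N → ℂ) : Pt p N → ℂ :=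
  (List.ofFn fun i : Fin p => (mder s (ex i))^[l i]).foldr (· ∘ ·) id <|
    (List.ofFn fun j : Fin N => (mder s (efib j))^[α j]).foldr (· ∘ ·) id <|
      (mder s et)^[m] g

/-- `K` is a conic compact subset of `U × [0,1]` relative to `V = {x : (x,0) ∈ U}`:
it is compact, contained in `U × [0,1]`, and its points over `t = 0` have vanishing
fiber component (i.e. `K ∩ (U × {0}) ⊆ (V × {0}) × {0}`). -/
def ConicCompact {p N : ℕ} (U : Set ((Fin p → ℝ) × (Fin N → ℝ))) (K : Set (Pt p N)) : Prop :=
  IsCompact K ∧ (∀ z ∈ K, (z.1, z.2.1) ∈ U ∧ z.2.2 ∈ Icc (0 : ℝ) 1) ∧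
    ∀ z ∈ K, z.2.2 = 0 → z.2.1 = 0

/-- `g` has conic compact support: there is a conic compact `K` relative to `V` such
that `g(x,ξ,t) = 0` whenever `t ≠ 0` and `(x, tξ, t) ∉ K`. -/
def HasConicSupport {p N : ℕ} (U : Set ((Fin p → ℝ) × (Fin N → ℝ))) (g : Pt p N → ℂ) : Prop :=
  ∃ K, ConicCompact U K ∧
    ∀ z ∈ Omega U, z.2.2 ≠ 0 → (z.1, z.2.2 • z.2.1, z.2.2) ∉ K → g z = 0

/-- The rapid decay condition `(s1)`: all mixed partial derivatives are dominated by
arbitrary negative powers of `1 + ‖ξ‖²`, uniformly on `Ω_V^U`. -/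
def RapidDecay {p N : ℕ} (U : Set ((Fin p → ℝ) × (Fin N → ℝ))) (g : Pt p N → ℂ) : Prop :=
  ∀ (k m : ℕ) (l : Fin p → ℕ) (α : Fin N → ℕ), ∃ C > 0, ∀ z ∈ Omega U,
    (1 + ‖z.2.1‖ ^ 2) ^ k * ‖mixedD (Omega U) l α m g z‖ ≤ C

/-- `g ∈ S_{r,c}(Ω_V^U)`: smooth on `Ω_V^U`, conic compact support, rapid decay `(s1)`. -/
def MemSrc {p N : ℕ} (U : Set ((Fin p → ℝ) × (Fin N → ℝ))) (g : Pt p N → ℂ) : Prop :=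
  ContDiffOn ℝ (⊤ : ℕ∞) g (Omega U) ∧ HasConicSupport U g ∧ RapidDecay U g

/-!
The Leibniz rule expands `∂_x^l ∂_ζ^α ∂_t^m h` as a sum, over all ways of splitting the list of
differentiation directions into two sublists, of products of derivatives of `f ∘ L₁` and `g ∘ L₂`,
where `L₁, L₂ : (x, η, ξ, t) ↦ (x, η, t), (x, ξ, t)`. By the chain rule these are derivatives of
`f` and `g` along the images of the sublists under `L₁, L₂`. Such an image either contains `0`
(a derivative in the fiber variable that the factor does not depend on), and the term vanishes,
or it is again the list of directions of a multi-index, so `(s1)` for `f` and `g` bounds the term,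
the weights being compared by `1 + ‖(η, ξ)‖² ≤ (1 + ‖η‖²)(1 + ‖ξ‖²)`.
The conic support of `h` is the preimage of `K_f × K_g` under the injective linear map
`z ↦ (L₁ z, L₂ z)`, compact because that map is a closed embedding.
-/

open scoped ContDiff

namespace List

lemma exists_eq_flatten_ofFn_replicate_of_sublist {D : Type*} {κ : ℕ} (c : Fin κ → ℕ)
    (v : Fin κ → D) {as : List D}
    (h : as.Sublist (ofFn fun i => replicate (c i) (v i)).flatten) :
    ∃ c' : Fin κ → ℕ, as = (ofFn fun i => replicate (c' i) (v i)).flatten := by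
  induction κ generalizing as with
  | zero => exact ⟨Fin.elim0, by simpa using h⟩
  | succ κ ih =>
    rw [ofFn_succ, flatten_cons] at h
    obtain ⟨a, b, rfl, ha, hb⟩ := sublist_append_iff.mp h
    obtain ⟨n, -, rfl⟩ := sublist_replicate_iff.mp ha
    obtain ⟨c', rfl⟩ := ih (fun i => c i.succ) (fun i => v i.succ) hb
    exact ⟨Fin.cons n c', by simp [ofFn_succ]⟩

lemma flatten_ofFn_replicate_eq_nil_or_mem {D : Type*} {κ : ℕ} (c : Fin κ → ℕ) (x : D) :
    (ofFn fun i => replicate (c i) x).flatten = [] ∨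
      x ∈ (ofFn fun i => replicate (c i) x).flatten := by
  by_cases h : ∃ i, c i ≠ 0
  · obtain ⟨i, hi⟩ := h
    exact Or.inr (mem_flatten.mpr ⟨_, mem_ofFn.mpr ⟨i, rfl⟩, mem_replicate.mpr ⟨hi, rfl⟩⟩)
  · push Not at h
    simp [h]

lemma flatten_ofFn_add {D : Type*} {q : ℕ} (A : Fin (q + q) → List D) :
    (ofFn A).flatten =
      (ofFn fun j => A (Fin.castAdd q j)).flatten ++
        (ofFn fun j => A (Fin.natAdd q j)).flatten := by
  rw [ofFn_add, flatten_append]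
  rfl

/-- All ways of distributing the entries of a list, in order, over two lists. -/
def splittings {γ : Type*} : List γ → List (List γ × List γ)
  | [] => [([], [])]
  | v :: vs => (splittings vs).map (fun ab => (v :: ab.1, ab.2)) ++
      (splittings vs).map (fun ab => (ab.1, v :: ab.2))

lemma sublist_of_mem_splittings {γ : Type*} {vs : List γ} {ab : List γ × List γ}
    (h : ab ∈ splittings vs) : ab.1.Sublist vs ∧ ab.2.Sublist vs := by
  induction vs generalizing ab with
  | nil => simp_all [splittings]
  | cons v vs ih =>
    simp only [splittings, mem_append, mem_map] at h
    rcases h with ⟨a, ha, rfl⟩ | ⟨a, ha, rfl⟩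
    · exact ⟨(ih ha).1.cons_cons v, (ih ha).2.cons v⟩
    · exact ⟨(ih ha).1.cons v, (ih ha).2.cons_cons v⟩

end List

lemma Fin.castAdd_ne_natAdd {q : ℕ} (j j' : Fin q) : Fin.castAdd q j ≠ Fin.natAdd q j' := by
  rw [Ne, Fin.ext_iff, Fin.val_castAdd, Fin.val_natAdd]
  omega

lemma exists_bound_list_sum {X ι A : Type*} [SeminormedAddCommGroup A] {s : Set X} {w : X → ℝ}
    (hw : ∀ z ∈ s, 0 ≤ w z) (l : List ι) {T : ι → X → A}
    (hT : ∀ i ∈ l, ∃ C, ∀ z ∈ s, w z * ‖T i z‖ ≤ C) :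
    ∃ C, ∀ z ∈ s, w z * ‖(l.map (T · z)).sum‖ ≤ C := by
  induction l with
  | nil => exact ⟨0, fun z _ => by simp⟩
  | cons i l ih =>
    obtain ⟨C₁, h₁⟩ := hT i (by simp)
    obtain ⟨C₂, h₂⟩ := ih fun j hj => hT j (by simp [hj])
    refine ⟨C₁ + C₂, fun z hz => ?_⟩
    calc w z * ‖((i :: l).map (T · z)).sum‖ ≤ w z * (‖T i z‖ + ‖(l.map (T · z)).sum‖) := by
          rw [List.map_cons, List.sum_cons]
          exact mul_le_mul_of_nonneg_left (norm_add_le _ _) (hw z hz)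
      _ ≤ C₁ + C₂ := by rw [mul_add]; exact add_le_add (h₁ z hz) (h₂ z hz)

section IterDirDeriv

variable {𝕜 : Type*} [NontriviallyNormedField 𝕜]
  {E : Type*} [NormedAddCommGroup E] [NormedSpace 𝕜 E]
  {F : Type*} [NormedAddCommGroup F] [NormedSpace 𝕜 F]
  {G : Type*} [NormedAddCommGroup G] [NormedSpace 𝕜 G]

variable (𝕜) in
/-- `iterDirDerivWithin 𝕜 s [v₁, …, vₙ] g = ∂_{v₁} ⋯ ∂_{vₙ} g`, each derivative taken within
`s`. -/
def iterDirDerivWithin (s : Set E) (vs : List E) (g : E → F) : E → F :=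
  vs.foldr (fun v h z => fderivWithin 𝕜 h s z v) g

variable {s : Set E} {t : Set G}

@[simp]
lemma iterDirDerivWithin_nil (g : E → F) : iterDirDerivWithin 𝕜 s [] g = g := rfl

lemma iterDirDerivWithin_cons (v : E) (vs : List E) (g : E → F) (z : E) :
    iterDirDerivWithin 𝕜 s (v :: vs) g z =
      fderivWithin 𝕜 (iterDirDerivWithin 𝕜 s vs g) s z v :=
  rfl

lemma iterDirDerivWithin_append (vs ws : List E) (g : E → F) :
    iterDirDerivWithin 𝕜 s (vs ++ ws) g =
      iterDirDerivWithin 𝕜 s vs (iterDirDerivWithin 𝕜 s ws g) :=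
  List.foldr_append

lemma iterDirDerivWithin_replicate (n : ℕ) (v : E) :
    iterDirDerivWithin 𝕜 s (List.replicate n v) =
      (fun (h : E → F) z => fderivWithin 𝕜 h s z v)^[n] := by
  induction n with
  | zero => rfl
  | succ n ih => funext g; rw [List.replicate_succ, Function.iterate_succ_apply', ← ih]; rfl

lemma iterDirDerivWithin_flatten (vss : List (List E)) (g : E → F) :
    iterDirDerivWithin 𝕜 s vss.flatten g =
      (vss.map (iterDirDerivWithin 𝕜 s)).foldr (· ∘ ·) id g := by
  induction vss with
  | nil => rfl
  | cons vs vss ih => rw [List.flatten_cons, iterDirDerivWithin_append, ih]; rfl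

lemma ContDiffOn.iterDirDerivWithin {g : E → F} (hg : ContDiffOn 𝕜 ∞ g s)
    (hs : UniqueDiffOn 𝕜 s) (vs : List E) : ContDiffOn 𝕜 ∞ (iterDirDerivWithin 𝕜 s vs g) s := by
  induction vs with
  | nil => exact hg
  | cons v vs ih => exact (ih.fderivWithin hs (by simp)).clm_apply contDiffOn_const

lemma iterDirDerivWithin_eq_zero_of_zero_mem {vs : List E} (h0 : (0 : E) ∈ vs) (g : E → F) :
    ∀ z ∈ s, iterDirDerivWithin 𝕜 s vs g z = 0 := by
  induction vs with
  | nil => simp at h0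
  | cons v vs ih =>
    intro z hz
    rcases List.mem_cons.1 h0 with rfl | h0
    · simp [iterDirDerivWithin_cons]
    · rw [iterDirDerivWithin_cons, fderivWithin_congr (ih h0) (ih h0 z hz)]
      simp

lemma iterDirDerivWithin_comp_clm {A : G → F} (hA : ContDiffOn 𝕜 ∞ A t)
    (ht : UniqueDiffOn 𝕜 t) (hs : UniqueDiffOn 𝕜 s) (L : E →L[𝕜] G) (hL : MapsTo L s t)
    (vs : List E) :
    ∀ z ∈ s, iterDirDerivWithin 𝕜 s vs (A ∘ L) z = iterDirDerivWithin 𝕜 t (vs.map L) A (L z) := by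
  induction vs with
  | nil => intro z _; rfl
  | cons v vs ih =>
    intro z hz
    have hdiff : DifferentiableWithinAt 𝕜 (iterDirDerivWithin 𝕜 t (vs.map L) A) t (L z) :=
      ((hA.iterDirDerivWithin ht _).differentiableOn (by simp)) _ (hL hz)
    rw [List.map_cons, iterDirDerivWithin_cons, iterDirDerivWithin_cons,
      fderivWithin_congr (f := iterDirDerivWithin 𝕜 t (vs.map L) A ∘ L) ih (ih z hz),
      fderivWithin_comp z hdiff L.differentiableWithinAt hL (hs z hz), L.fderivWithin (hs z hz)]
    rfl

lemma HasFDerivWithinAt.list_sum {ι : Type*} {l : List ι} {A : ι → E → F}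
    {A' : ι → E →L[𝕜] F} {z : E} (h : ∀ i ∈ l, HasFDerivWithinAt (A i) (A' i) s z) :
    HasFDerivWithinAt (fun y => (l.map (A · y)).sum) (l.map A').sum s z := by
  induction l with
  | nil => simpa using hasFDerivWithinAt_const (0 : F) z s
  | cons a l ih =>
    simp only [List.map_cons, List.sum_cons]
    exact (h a (by simp)).add (ih fun i hi => h i (by simp [hi]))

theorem iterDirDerivWithin_mul {𝔸 : Type*} [NormedCommRing 𝔸] [NormedAlgebra 𝕜 𝔸] {a b : E → 𝔸}
    (ha : ContDiffOn 𝕜 ∞ a s) (hb : ContDiffOn 𝕜 ∞ b s) (hs : UniqueDiffOn 𝕜 s) (vs : List E) :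
    ∀ z ∈ s, iterDirDerivWithin 𝕜 s vs (fun y => a y * b y) z =
      ((vs.splittings).map fun ab =>
        iterDirDerivWithin 𝕜 s ab.1 a z * iterDirDerivWithin 𝕜 s ab.2 b z).sum := by
  induction vs with
  | nil => intro z _; simp [List.splittings]
  | cons v vs ih =>
    intro z hz
    have hdiff {c : E → 𝔸} (hc : ContDiffOn 𝕜 ∞ c s) (ws : List E) :
        DifferentiableWithinAt 𝕜 (iterDirDerivWithin 𝕜 s ws c) s z :=
      ((hc.iterDirDerivWithin hs ws).differentiableOn (by simp)) z hz
    have hsum : HasFDerivWithinAt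
        (fun y => ((vs.splittings).map fun ab =>
          iterDirDerivWithin 𝕜 s ab.1 a y * iterDirDerivWithin 𝕜 s ab.2 b y).sum)
        ((vs.splittings).map fun ab =>
          iterDirDerivWithin 𝕜 s ab.1 a z • fderivWithin 𝕜 (iterDirDerivWithin 𝕜 s ab.2 b) s z +
          iterDirDerivWithin 𝕜 s ab.2 b z • fderivWithin 𝕜 (iterDirDerivWithin 𝕜 s ab.1 a) s z).sum
        s z :=
      HasFDerivWithinAt.list_sum fun ab _ =>
        (hdiff ha ab.1).hasFDerivWithinAt.mul (hdiff hb ab.2).hasFDerivWithinAt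
    rw [iterDirDerivWithin_cons, fderivWithin_congr ih (ih z hz), hsum.fderivWithin (hs z hz),
      ← ContinuousLinearMap.apply_apply (𝕜 := 𝕜) v, map_list_sum]
    simp only [List.splittings, List.map_append, List.map_map, List.sum_append,
      ← List.sum_map_add]
    congr 1
    refine List.map_congr_left fun ab _ => ?_
    simp only [Function.comp_apply, ContinuousLinearMap.apply_apply, add_apply, smul_apply,
      smul_eq_mul, iterDirDerivWithin_cons]
    ring

end IterDirDeriv

variable {p q N : ℕ}

/-- The directions of `∂_x^l ∂_ξ^α ∂_t^m`, in the order in which `mixedD` applies them. -/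
def coordDirs (l : Fin p → ℕ) (α : Fin N → ℕ) (m : ℕ) : List (Pt p N) :=
  (List.ofFn fun i => List.replicate (l i) (ex i)).flatten ++
    ((List.ofFn fun j => List.replicate (α j) (efib j)).flatten ++ List.replicate m et)

lemma mixedD_eq_iterDirDerivWithin (s : Set (Pt p N)) (l : Fin p → ℕ) (α : Fin N → ℕ) (m : ℕ)
    (g : Pt p N → ℂ) : mixedD s l α m g = iterDirDerivWithin ℝ s (coordDirs l α m) g := by
  simp only [mixedD, coordDirs, iterDirDerivWithin_append, iterDirDerivWithin_flatten,
    List.map_ofFn, Function.comp_def, iterDirDerivWithin_replicate]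
  rfl

lemma exists_eq_coordDirs_of_sublist {l : Fin p → ℕ} {α : Fin N → ℕ} {m : ℕ}
    {ws : List (Pt p N)} (h : ws.Sublist (coordDirs l α m)) :
    ∃ l' α' m', ws = coordDirs l' α' m' := by
  obtain ⟨a, bc, rfl, ha, hbc⟩ := List.sublist_append_iff.mp h
  obtain ⟨b, c, rfl, hb, hc⟩ := List.sublist_append_iff.mp hbc
  obtain ⟨l', rfl⟩ := List.exists_eq_flatten_ofFn_replicate_of_sublist l ex ha
  obtain ⟨α', rfl⟩ := List.exists_eq_flatten_ofFn_replicate_of_sublist α efib hb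
  obtain ⟨m', -, rfl⟩ := List.sublist_replicate_iff.mp hc
  exact ⟨l', α', m', rfl⟩

variable (p) in
def restrictFib (e : Fin q → Fin N) : Pt p N →L[ℝ] Pt p q :=
  (ContinuousLinearMap.id ℝ _).prodMap
    ((LinearMap.funLeft ℝ ℝ e).toContinuousLinearMap.prodMap (ContinuousLinearMap.id ℝ ℝ))

section restrictFib

variable {e : Fin q → Fin N}

lemma restrictFib_apply (z : Pt p N) : restrictFib p e z = (z.1, z.2.1 ∘ e, z.2.2) := rfl

lemma restrictFib_ex (i : Fin p) : restrictFib p e (ex i) = ex i := rfl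

lemma restrictFib_et : restrictFib p e et = et := rfl

lemma restrictFib_efib_apply (he : Function.Injective e) (j : Fin q) :
    restrictFib p e (efib (e j)) = efib j := by
  refine Prod.ext rfl (Prod.ext (funext fun j' => ?_) rfl)
  simp [restrictFib_apply, efib, Pi.single_apply, he.eq_iff]

lemma restrictFib_efib_of_notMem_range {j : Fin N} (hj : j ∉ Set.range e) :
    restrictFib p e (efib j) = 0 := by
  have : ∀ j', e j' ≠ j := fun j' h => hj ⟨j', h⟩
  refine Prod.ext rfl (Prod.ext (funext fun j' => ?_) rfl)
  simp [restrictFib_apply, efib, this]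

lemma map_restrictFib_coordDirs (l : Fin p → ℕ) (α : Fin N → ℕ) (m : ℕ) :
    (coordDirs l α m).map (restrictFib p e) =
      (List.ofFn fun i => List.replicate (l i) (ex i)).flatten ++
        ((List.ofFn fun j => List.replicate (α j) (restrictFib p e (efib j))).flatten ++
          List.replicate m et) := by
  simp only [coordDirs, List.map_append, List.map_flatten, List.map_ofFn, Function.comp_def,
    List.map_replicate, restrictFib_ex, restrictFib_et]

end restrictFib

lemma map_restrictFib_castAdd_coordDirs (l : Fin p → ℕ) (α : Fin (q + q) → ℕ) (m : ℕ) :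
    (coordDirs l α m).map (restrictFib p (Fin.castAdd q)) = coordDirs l (α ∘ Fin.castAdd q) m ∨
      (0 : Pt p q) ∈ (coordDirs l α m).map (restrictFib p (Fin.castAdd q)) := by
  have hnat (j : Fin q) : Fin.natAdd q j ∉ Set.range (Fin.castAdd q) := by
    rintro ⟨j', h⟩
    exact Fin.castAdd_ne_natAdd j' j h
  rw [map_restrictFib_coordDirs, List.flatten_ofFn_add]
  simp only [restrictFib_efib_apply (Fin.castAdd_injective q q),
    restrictFib_efib_of_notMem_range (hnat _)]
  rcases List.flatten_ofFn_replicate_eq_nil_or_mem (fun j => α (Fin.natAdd q j)) (0 : Pt p q)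
    with h | h
  · left
    rw [h, List.append_nil]
    rfl
  · exact Or.inr (List.mem_append_right _ (List.mem_append_left _ (List.mem_append_right _ h)))

lemma map_restrictFib_natAdd_coordDirs (l : Fin p → ℕ) (α : Fin (q + q) → ℕ) (m : ℕ) :
    (coordDirs l α m).map (restrictFib p (Fin.natAdd q)) = coordDirs l (α ∘ Fin.natAdd q) m ∨
      (0 : Pt p q) ∈ (coordDirs l α m).map (restrictFib p (Fin.natAdd q)) := by
  have hcast (j : Fin q) : Fin.castAdd q j ∉ Set.range (Fin.natAdd q) := by
    rintro ⟨j', h⟩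
    exact Fin.castAdd_ne_natAdd j j' h.symm
  rw [map_restrictFib_coordDirs, List.flatten_ofFn_add]
  simp only [restrictFib_efib_apply (Fin.natAdd_injective q q),
    restrictFib_efib_of_notMem_range (hcast _)]
  rcases List.flatten_ofFn_replicate_eq_nil_or_mem (fun j => α (Fin.castAdd q j)) (0 : Pt p q)
    with h | h
  · left
    rw [h, List.nil_append]
    rfl
  · exact Or.inr (List.mem_append_right _ (List.mem_append_left _ (List.mem_append_left _ h)))

lemma uniqueDiffOn_omega {U : Set ((Fin p → ℝ) × (Fin N → ℝ))} (hU : IsOpen U) :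
    UniqueDiffOn ℝ (Omega U) := by
  have hcont : Continuous fun z : Pt p N => (z.1, z.2.2 • z.2.1) :=
    continuous_fst.prodMk (continuous_snd.snd.smul continuous_snd.fst)
  have hOmega : Omega U =
      (univ ×ˢ (univ ×ˢ Icc 0 1)) ∩ (fun z : Pt p N => (z.1, z.2.2 • z.2.1)) ⁻¹' U := by
    ext z
    simp [Omega]
  rw [hOmega]
  exact (uniqueDiffOn_univ.prod (uniqueDiffOn_univ.prod uniqueDiffOn_Icc_zero_one)).inter
    (hU.preimage hcont)

lemma RapidDecay.exists_bound_iterDirDerivWithin {U : Set ((Fin p → ℝ) × (Fin N → ℝ))}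
    {f : Pt p N → ℂ} (hf : RapidDecay U f) (k : ℕ) {ws : List (Pt p N)}
    (hws : (∃ l α m, ws = coordDirs l α m) ∨ (0 : Pt p N) ∈ ws) :
    ∃ C, ∀ y ∈ Omega U,
      (1 + ‖y.2.1‖ ^ 2) ^ k * ‖iterDirDerivWithin ℝ (Omega U) ws f y‖ ≤ C := by
  rcases hws with ⟨l, α, m, rfl⟩ | h0
  · obtain ⟨C, -, hC⟩ := hf k m l α
    exact ⟨C, fun y hy => mixedD_eq_iterDirDerivWithin (Omega U) l α m f ▸ hC y hy⟩
  · exact ⟨0, fun y hy => by simp [iterDirDerivWithin_eq_zero_of_zero_mem h0 f y hy]⟩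

lemma one_add_sq_le_mul_of_le_max {a b c : ℝ} (hc : 0 ≤ c) (h : c ≤ max a b) :
    1 + c ^ 2 ≤ (1 + a ^ 2) * (1 + b ^ 2) := by
  have : c ^ 2 ≤ a ^ 2 + b ^ 2 := by
    rcases le_max_iff.mp h with h | h <;> nlinarith [sq_nonneg a, sq_nonneg b]
  nlinarith [mul_nonneg (sq_nonneg a) (sq_nonneg b)]

lemma norm_le_max_norm_comp_castAdd_natAdd (ζ : Fin (q + q) → ℝ) :
    ‖ζ‖ ≤ max ‖ζ ∘ Fin.castAdd q‖ ‖ζ ∘ Fin.natAdd q‖ := by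
  refine (pi_norm_le_iff_of_nonneg (le_max_of_le_left (norm_nonneg _))).mpr fun i => ?_
  refine Fin.addCases (fun j => ?_) (fun j => ?_) i
  · exact le_max_of_le_left (norm_le_pi_norm (ζ ∘ Fin.castAdd q) j)
  · exact le_max_of_le_right (norm_le_pi_norm (ζ ∘ Fin.natAdd q) j)

lemma one_add_norm_sq_pow_le_mul (ζ : Fin (q + q) → ℝ) (k : ℕ) :
    (1 + ‖ζ‖ ^ 2) ^ k ≤
      (1 + ‖ζ ∘ Fin.castAdd q‖ ^ 2) ^ k * (1 + ‖ζ ∘ Fin.natAdd q‖ ^ 2) ^ k := by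
  rw [← mul_pow]
  exact pow_le_pow_left₀ (by positivity)
    (one_add_sq_le_mul_of_le_max (norm_nonneg _) (norm_le_max_norm_comp_castAdd_natAdd ζ)) k

/-- The set `W` of the statement. -/
def fibPair (U : Set ((Fin p → ℝ) × (Fin q → ℝ))) : Set ((Fin p → ℝ) × (Fin (q + q) → ℝ)) :=
  {w | (w.1, fun j => w.2 (Fin.castAdd q j)) ∈ U ∧ (w.1, fun j => w.2 (Fin.natAdd q j)) ∈ U}

/-- The function `h` of the statement. -/
def fibProd (f g : Pt p q → ℂ) : Pt p (q + q) → ℂ :=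
  fun z => f (restrictFib p (Fin.castAdd q) z) * g (restrictFib p (Fin.natAdd q) z)

section fibProd

variable {U : Set ((Fin p → ℝ) × (Fin q → ℝ))} {f g : Pt p q → ℂ}

local notation "L₁" => restrictFib p (Fin.castAdd q)
local notation "L₂" => restrictFib p (Fin.natAdd q)

lemma IsOpen.fibPair (hU : IsOpen U) : IsOpen (fibPair U) := by
  have hcont (e : Fin q → Fin (q + q)) :
      Continuous fun w : (Fin p → ℝ) × (Fin (q + q) → ℝ) => (w.1, fun j => w.2 (e j)) :=
    continuous_fst.prodMk (continuous_pi fun j => (continuous_apply (e j)).comp continuous_snd)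
  exact (hU.preimage (hcont _)).inter (hU.preimage (hcont _))

lemma mapsTo_restrictFib_castAdd : MapsTo L₁ (Omega (fibPair U)) (Omega U) :=
  fun _ hz => ⟨hz.1, hz.2.1⟩

lemma mapsTo_restrictFib_natAdd : MapsTo L₂ (Omega (fibPair U)) (Omega U) :=
  fun _ hz => ⟨hz.1, hz.2.2⟩

lemma ContDiffOn.fibProd (hf : ContDiffOn ℝ ∞ f (Omega U)) (hg : ContDiffOn ℝ ∞ g (Omega U)) :
    ContDiffOn ℝ ∞ (fibProd f g) (Omega (fibPair U)) :=
  (hf.comp (L₁).contDiff.contDiffOn mapsTo_restrictFib_castAdd).mul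
    (hg.comp (L₂).contDiff.contDiffOn mapsTo_restrictFib_natAdd)

lemma restrictFib_prod_injective : Function.Injective ((L₁).prod L₂) := by
  intro z z' h
  simp only [ContinuousLinearMap.prod_apply, restrictFib_apply, Prod.ext_iff] at h
  obtain ⟨⟨hx, hη, ht⟩, -, hξ, -⟩ := h
  exact Prod.ext hx (Prod.ext (funext fun i => Fin.addCases (congrFun hη) (congrFun hξ) i) ht)

lemma HasConicSupport.fibProd (hf : HasConicSupport U f) (hg : HasConicSupport U g) :
    HasConicSupport (fibPair U) (fibProd f g) := by
  obtain ⟨Kf, ⟨hKf, hKfU, hKf0⟩, hfK⟩ := hf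
  obtain ⟨Kg, ⟨hKg, hKgU, hKg0⟩, hgK⟩ := hg
  refine ⟨(L₁).prod L₂ ⁻¹' Kf ×ˢ Kg, ⟨?_, fun z hz => ?_, fun z hz ht => ?_⟩, fun z hz ht hzK => ?_⟩
  · exact (LinearMap.isClosedEmbedding_of_injective
      (LinearMap.ker_eq_bot.mpr restrictFib_prod_injective)).isCompact_preimage (hKf.prod hKg)
  · exact ⟨⟨(hKfU _ hz.1).1, (hKgU _ hz.2).1⟩, (hKfU _ hz.1).2⟩
  · exact funext fun i => Fin.addCases (congrFun (hKf0 _ hz.1 ht)) (congrFun (hKg0 _ hz.2 ht)) i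
  · rcases not_and_or.mp hzK with h | h
    · exact mul_eq_zero_of_left (hfK _ (mapsTo_restrictFib_castAdd hz) ht h) _
    · exact mul_eq_zero_of_right _ (hgK _ (mapsTo_restrictFib_natAdd hz) ht h)

lemma mixedD_fibProd_eq_sum (hU : IsOpen U) (hf : ContDiffOn ℝ ∞ f (Omega U))
    (hg : ContDiffOn ℝ ∞ g (Omega U)) (l : Fin p → ℕ) (α : Fin (q + q) → ℕ) (m : ℕ) :
    ∀ z ∈ Omega (fibPair U), mixedD (Omega (fibPair U)) l α m (fibProd f g) z =
      ((coordDirs l α m).splittings.map fun ab =>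
        iterDirDerivWithin ℝ (Omega U) (ab.1.map L₁) f (L₁ z) *
          iterDirDerivWithin ℝ (Omega U) (ab.2.map L₂) g (L₂ z)).sum := by
  have hΩ := uniqueDiffOn_omega hU
  have hΩW := uniqueDiffOn_omega hU.fibPair
  intro z hz
  rw [mixedD_eq_iterDirDerivWithin, show fibProd f g = fun y => (f ∘ L₁) y * (g ∘ L₂) y from rfl,
    iterDirDerivWithin_mul (hf.comp (L₁).contDiff.contDiffOn mapsTo_restrictFib_castAdd)
      (hg.comp (L₂).contDiff.contDiffOn mapsTo_restrictFib_natAdd) hΩW _ z hz]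
  refine congrArg List.sum (List.map_congr_left fun ab _ => ?_)
  rw [iterDirDerivWithin_comp_clm hf hΩ hΩW _ mapsTo_restrictFib_castAdd _ z hz,
    iterDirDerivWithin_comp_clm hg hΩ hΩW _ mapsTo_restrictFib_natAdd _ z hz]

lemma exists_bound_fibProd_term (hf : RapidDecay U f) (hg : RapidDecay U g) (k : ℕ)
    {l : Fin p → ℕ} {α : Fin (q + q) → ℕ} {m : ℕ}
    {ab : List (Pt p (q + q)) × List (Pt p (q + q))} (hab : ab ∈ (coordDirs l α m).splittings) :
    ∃ C, ∀ z ∈ Omega (fibPair U), (1 + ‖z.2.1‖ ^ 2) ^ k *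
      ‖iterDirDerivWithin ℝ (Omega U) (ab.1.map L₁) f (L₁ z) *
        iterDirDerivWithin ℝ (Omega U) (ab.2.map L₂) g (L₂ z)‖ ≤ C := by
  obtain ⟨l₁, α₁, m₁, h₁⟩ := exists_eq_coordDirs_of_sublist (List.sublist_of_mem_splittings hab).1
  obtain ⟨l₂, α₂, m₂, h₂⟩ := exists_eq_coordDirs_of_sublist (List.sublist_of_mem_splittings hab).2
  have hws₁ : (∃ l α m, ab.1.map L₁ = coordDirs l α m) ∨ (0 : Pt p q) ∈ ab.1.map L₁ := by
    rw [h₁]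
    exact (map_restrictFib_castAdd_coordDirs l₁ α₁ m₁).imp_left fun h => ⟨_, _, _, h⟩
  have hws₂ : (∃ l α m, ab.2.map L₂ = coordDirs l α m) ∨ (0 : Pt p q) ∈ ab.2.map L₂ := by
    rw [h₂]
    exact (map_restrictFib_natAdd_coordDirs l₂ α₂ m₂).imp_left fun h => ⟨_, _, _, h⟩
  obtain ⟨C₁, hC₁⟩ := hf.exists_bound_iterDirDerivWithin k hws₁
  obtain ⟨C₂, hC₂⟩ := hg.exists_bound_iterDirDerivWithin k hws₂
  refine ⟨C₁ * C₂, fun z hz => ?_⟩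
  set A := ‖iterDirDerivWithin ℝ (Omega U) (ab.1.map L₁) f (L₁ z)‖
  set B := ‖iterDirDerivWithin ℝ (Omega U) (ab.2.map L₂) g (L₂ z)‖
  have hA : (1 + ‖(L₁ z).2.1‖ ^ 2) ^ k * A ≤ C₁ := hC₁ _ (mapsTo_restrictFib_castAdd hz)
  have hB : (1 + ‖(L₂ z).2.1‖ ^ 2) ^ k * B ≤ C₂ := hC₂ _ (mapsTo_restrictFib_natAdd hz)
  rw [norm_mul]
  calc (1 + ‖z.2.1‖ ^ 2) ^ k * (A * B)
      ≤ ((1 + ‖(L₁ z).2.1‖ ^ 2) ^ k * (1 + ‖(L₂ z).2.1‖ ^ 2) ^ k) * (A * B) := by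
        gcongr
        exact one_add_norm_sq_pow_le_mul z.2.1 k
    _ = ((1 + ‖(L₁ z).2.1‖ ^ 2) ^ k * A) * ((1 + ‖(L₂ z).2.1‖ ^ 2) ^ k * B) := by ring
    _ ≤ C₁ * C₂ := mul_le_mul hA hB (by positivity) ((by positivity : (0 : ℝ) ≤ _).trans hA)

lemma RapidDecay.fibProd (hU : IsOpen U) (hfs : ContDiffOn ℝ ∞ f (Omega U))
    (hgs : ContDiffOn ℝ ∞ g (Omega U)) (hf : RapidDecay U f) (hg : RapidDecay U g) :
    RapidDecay (fibPair U) (fibProd f g) := by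
  intro k m l α
  obtain ⟨C, hC⟩ := exists_bound_list_sum (w := fun z : Pt p (q + q) => (1 + ‖z.2.1‖ ^ 2) ^ k)
    (fun _ _ => by positivity) _ fun ab hab => exists_bound_fibProd_term hf hg k hab
  refine ⟨max C 1, by positivity, fun z hz => ?_⟩
  rw [mixedD_fibProd_eq_sum hU hfs hgs l α m z hz]
  exact (hC z hz).trans (le_max_left _ _)

end fibProd

/-- local form of the Leibniz-formula step in the proof of the main Theorem
of the paper: for `f, g ∈ S_{r,c}(Ω_V^U)`, the function
`h(x,η,ξ,t) = f(x,η,t)·g(x,ξ,t)` belongs to `S_{r,c}(Ω_V^W)`, where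
`W = {(x,η,ξ) : (x,η) ∈ U and (x,ξ) ∈ U}` (the fiber `ℝ^q × ℝ^q` being modeled as
`Fin (q+q) → ℝ`, with first block `η` and second block `ξ`). -/
theorem stmt13 {p q : ℕ} (U : Set ((Fin p → ℝ) × (Fin q → ℝ))) (hU : IsOpen U)
    (f g : Pt p q → ℂ) (hf : MemSrc U f) (hg : MemSrc U g) :
    MemSrc
      {w : (Fin p → ℝ) × (Fin (q + q) → ℝ) |
        (w.1, fun j => w.2 (Fin.castAdd q j)) ∈ U ∧
        (w.1, fun j => w.2 (Fin.natAdd q j)) ∈ U}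
      (fun z : Pt p (q + q) =>
        f (z.1, fun j => z.2.1 (Fin.castAdd q j), z.2.2) *
        g (z.1, fun j => z.2.1 (Fin.natAdd q j), z.2.2)) := by
  obtain ⟨hfs, hfK, hfd⟩ := hf
  obtain ⟨hgs, hgK, hgd⟩ := hg
  exact ⟨hfs.fibProd hgs, hfK.fibProd hgK, hfd.fibProd hU hfs hgs hgd⟩
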